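/- arXiv:2408.05260 — 4 statements merged into one kernel-verified Lean document; each statement's English description precedes it below -/
import Mathlib

section
/- Let D = (L, μ) be a quantum code of type (N, M) with unitary U : M ⊗ F → L, let P : M → M be a unitary with associated unitary channel 𝒫(X) = P X P*, and let R : L(L) → L(L) be a quantum channel satisfying μ* ∘ R = 𝒫 ∘ μ*. Then there exists a quantum channel 𝓕 : L(F) → L(F) such that U* R(U X U*) U = (𝒫 ⊗ 𝓕)(X) for all X ∈ L(M ⊗ F); that is, conjugating R by the code unitary yields the tensor product of the logical unitary channel 𝒫 with a channel 𝓕 acting on the syndrome space F. -/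
open scoped ComplexOrder Kronecker
open Matrix

noncomputable section

namespace Paper

/-- The positive semidefinite square root (Mathlib's former `Matrix.PosSemidef.sqrt`). -/
def posSemidefSqrt {n : Type*} [Fintype n] [DecidableEq n] {A : Matrix n n ℂ}
    (hA : A.PosSemidef) : Matrix n n ℂ :=
  hA.1.eigenvectorUnitary.1 * diagonal ((↑) ∘ (√·) ∘ hA.1.eigenvalues) *
    (star hA.1.eigenvectorUnitary : Matrix n n ℂ)

/-- The trace norm `‖A‖₁ = Tr √(AᴴA)` of a complex matrix. -/
def traceNorm {m n : Type*} [Fintype m] [Fintype n] [DecidableEq n]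
    (A : Matrix m n ℂ) : ℝ :=
  ((posSemidefSqrt (Matrix.posSemidef_conjTranspose_mul_self A)).trace).re

/-- The ℓ²→ℓ² operator norm of a matrix. -/
def opNorm {m n : Type*} [Fintype m] [Fintype n] [DecidableEq n] (A : Matrix m n ℂ) : ℝ :=
  ‖LinearMap.toContinuousLinearMap (Matrix.toEuclideanLin A)‖

/-- `X ↦ A * X * Bᴴ` as a linear map on matrices. -/
def sandwich {m n : Type*} [Fintype m] (A B : Matrix n m ℂ) :
    Matrix m m ℂ →ₗ[ℂ] Matrix n n ℂ where
  toFun X := A * X * Bᴴ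
  map_add' X Y := by
    show A * (X + Y) * Bᴴ = A * X * Bᴴ + A * Y * Bᴴ
    rw [Matrix.mul_add, Matrix.add_mul]
  map_smul' c X := by
    show A * (c • X) * Bᴴ = c • (A * X * Bᴴ)
    rw [Matrix.mul_smul, Matrix.smul_mul]

/-- `id_{L(G)} ⊗ T`, acting blockwise. -/
def tensorLeft (G : Type*) {m n : Type*}
    (T : Matrix m m ℂ →ₗ[ℂ] Matrix n n ℂ) :
    Matrix (G × m) (G × m) ℂ →ₗ[ℂ] Matrix (G × n) (G × n) ℂ where
  toFun X := Matrix.of fun p q => T (Matrix.of fun i j => X (p.1, i) (q.1, j)) p.2 q.2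
  map_add' X Y := by
    ext p q
    show T (Matrix.of fun i j => (X + Y) (p.1, i) (q.1, j)) p.2 q.2
        = T (Matrix.of fun i j => X (p.1, i) (q.1, j)) p.2 q.2
          + T (Matrix.of fun i j => Y (p.1, i) (q.1, j)) p.2 q.2
    have h : (Matrix.of fun i j => (X + Y) (p.1, i) (q.1, j))
        = (Matrix.of fun i j => X (p.1, i) (q.1, j))
          + Matrix.of fun i j => Y (p.1, i) (q.1, j) := by
      ext i j; simp
    rw [h, map_add, Matrix.add_apply]
  map_smul' c X := by
    ext p q
    show T (Matrix.of fun i j => (c • X) (p.1, i) (q.1, j)) p.2 q.2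
        = c • T (Matrix.of fun i j => X (p.1, i) (q.1, j)) p.2 q.2
    have h : (Matrix.of fun i j => (c • X) (p.1, i) (q.1, j))
        = c • Matrix.of fun i j => X (p.1, i) (q.1, j) := by
      ext i j; simp
    rw [h, _root_.map_smul, Matrix.smul_apply]

/-- The induced trace norm `‖T‖₁` of a superoperator. -/
def inducedTraceNorm {m n : Type*} [Fintype m] [DecidableEq m] [Fintype n] [DecidableEq n]
    (T : Matrix m m ℂ →ₗ[ℂ] Matrix n n ℂ) : ℝ :=
  sSup {y | ∃ X : Matrix m m ℂ, traceNorm X ≤ 1 ∧ y = traceNorm (T X)}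

/-- The diamond norm `‖T‖◇` of a superoperator. -/
def dnorm {m n : Type*} [Fintype m] [DecidableEq m] [Fintype n] [DecidableEq n]
    (T : Matrix m m ℂ →ₗ[ℂ] Matrix n n ℂ) : ℝ :=
  sSup {y | ∃ k : ℕ, y = inducedTraceNorm (tensorLeft (Fin k) T)}

/-- Complete positivity of a superoperator. -/
def IsCP {m n : Type*} [Fintype m] [Fintype n]
    (T : Matrix m m ℂ →ₗ[ℂ] Matrix n n ℂ) : Prop :=
  ∀ (k : ℕ) (X : Matrix (Fin k × m) (Fin k × m) ℂ),
    X.PosSemidef → (tensorLeft (Fin k) T X).PosSemidef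

/-- Quantum channel: completely positive and trace preserving. -/
def IsChannel {m n : Type*} [Fintype m] [Fintype n]
    (T : Matrix m m ℂ →ₗ[ℂ] Matrix n n ℂ) : Prop :=
  IsCP T ∧ ∀ X : Matrix m m ℂ, (T X).trace = X.trace

/-- Density operator: positive semidefinite with trace 1. -/
def IsDensity {m : Type*} [Fintype m] (ρ : Matrix m m ℂ) : Prop :=
  ρ.PosSemidef ∧ ρ.trace = 1

/-- Partial trace over the second tensor factor. -/
def ptraceRight (a b : Type*) [Fintype b] :
    Matrix (a × b) (a × b) ℂ →ₗ[ℂ] Matrix a a ℂ where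
  toFun X := Matrix.of fun i j => ∑ k : b, X (i, k) (j, k)
  map_add' X Y := by ext i j; simp [Finset.sum_add_distrib]
  map_smul' c X := by ext i j; simp [Finset.mul_sum]

/-- Tensor product of superoperators. -/
def tensorSuperop {a b a' b' : Type*} [Fintype a] [DecidableEq a] [Fintype b] [DecidableEq b]
    (T : Matrix a a ℂ →ₗ[ℂ] Matrix a' a' ℂ) (S : Matrix b b ℂ →ₗ[ℂ] Matrix b' b' ℂ) :
    Matrix (a × b) (a × b) ℂ →ₗ[ℂ] Matrix (a' × b') (a' × b') ℂ where
  toFun X := Matrix.of fun p q =>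
    ∑ i : a, ∑ j : a, ∑ k : b, ∑ l : b,
      X (i, k) (j, l) * T (Matrix.single i j 1) p.1 q.1
        * S (Matrix.single k l 1) p.2 q.2
  map_add' X Y := by
    ext p q
    simp [add_mul, Finset.sum_add_distrib]
  map_smul' c X := by
    ext p q
    simp [Finset.mul_sum, mul_assoc]

/-- Tensor product of a family of superoperators. -/
def piTensorSuperop {ι : Type*} [Fintype ι] [DecidableEq ι] {α β : ι → Type*}
    [∀ i, Fintype (α i)] [∀ i, DecidableEq (α i)]
    (T : ∀ i, Matrix (α i) (α i) ℂ →ₗ[ℂ] Matrix (β i) (β i) ℂ) :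
    Matrix (∀ i, α i) (∀ i, α i) ℂ →ₗ[ℂ] Matrix (∀ i, β i) (∀ i, β i) ℂ where
  toFun X := Matrix.of fun p q =>
    ∑ x : ∀ i, α i, ∑ y : ∀ i, α i,
      X x y * ∏ i, T i (Matrix.single (x i) (y i) 1) (p i) (q i)
  map_add' X Y := by
    ext p q
    simp [add_mul, Finset.sum_add_distrib]
  map_smul' c X := by
    ext p q
    simp [Finset.mul_sum, mul_assoc]

/-- A (many-to-one) quantum code of type `(N, M)` with syndrome space `F` and
code subspace `L ⊆ N`, given by the isometric embedding `J : L → N` and the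
code unitary `U : M ⊗ F → L`. -/
structure Code (N M F L : Type*) [Fintype N] [Fintype M] [Fintype F] [Fintype L]
    [DecidableEq M] [DecidableEq F] [DecidableEq L] where
  J : Matrix N L ℂ
  J_isometry : Jᴴ * J = 1
  U : Matrix L (M × F) ℂ
  U_unitary_left : Uᴴ * U = 1
  U_unitary_right : U * Uᴴ = 1

variable {N M F L : Type*} [Fintype N] [Fintype M] [Fintype F] [Fintype L]
  [DecidableEq M] [DecidableEq F] [DecidableEq L]

/-- The embedding channel `𝒥(ρ) = J ρ J*`. -/
def Code.embed (D : Code N M F L) : Matrix L L ℂ →ₗ[ℂ] Matrix N N ℂ :=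
  sandwich D.J D.J

/-- The ideal decoder `μ*(ρ) = Tr_F (U* ρ U)`. -/
def Code.decode (D : Code N M F L) : Matrix L L ℂ →ₗ[ℂ] Matrix M M ℂ :=
  ptraceRight M F ∘ₗ sandwich D.Uᴴ D.Uᴴ

/-!
Conjugating `R` by the code unitary gives a channel `T = U* R(U · U*) U` on `M ⊗ F` with
`Tr_F ∘ T = 𝒫 ∘ Tr_F`, so `S = (P* ⊗ 1) T(·) (P ⊗ 1)` is a channel with `Tr_F ∘ S = Tr_F`.
Take a Kraus decomposition `S = ∑ₓ Kₓ · Kₓ*`. Feeding `ρ ⊗ |g⟩⟨g|` into `Tr_F ∘ S = Tr_F` shows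
that, for each `g`, the blocks `⟨· f| Kₓ |· g⟩` are Kraus operators of the identity channel on `M`,
hence scalars. So `Kₓ = 1 ⊗ kₓ`, and `T = ∑ₓ (P ⊗ kₓ) · (P ⊗ kₓ)* = 𝒫 ⊗ 𝓕` with
`𝓕 = ∑ₓ kₓ · kₓ*`.
-/

section Sandwich

variable {l m n : Type*} [Fintype m]

lemma sandwich_apply (A B : Matrix n m ℂ) (X : Matrix m m ℂ) :
    sandwich A B X = A * X * Bᴴ := rfl

lemma sandwich_single_apply [DecidableEq m] (A B : Matrix n m ℂ) (i j : m) (p q : n) :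
    sandwich A B (single i j 1) p q = A p i * star (B q j) := by
  simp [sandwich_apply, mul_apply, single_apply, ite_and]

lemma sandwich_comp_sandwich [Fintype n] (A B : Matrix l n ℂ) (C E : Matrix n m ℂ) :
    sandwich A B ∘ₗ sandwich C E = sandwich (A * C) (B * E) :=
  LinearMap.ext fun X => by simp [sandwich_apply, conjTranspose_mul, Matrix.mul_assoc]

lemma sandwich_one [DecidableEq m] : sandwich (1 : Matrix m m ℂ) 1 = LinearMap.id :=
  LinearMap.ext fun X => by simp [sandwich_apply]

lemma trace_sandwich [Fintype n] (A B : Matrix n m ℂ) (X : Matrix m m ℂ) :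
    (sandwich A B X).trace = (Bᴴ * A * X).trace := by
  rw [sandwich_apply, trace_mul_cycle]

end Sandwich

section TensorLeft

variable {G G' l m n ι : Type*}

lemma tensorLeft_apply (T : Matrix m m ℂ →ₗ[ℂ] Matrix n n ℂ) (X : Matrix (G × m) (G × m) ℂ)
    (p q : G × n) :
    tensorLeft G T X p q = T (of fun i j => X (p.1, i) (q.1, j)) p.2 q.2 := rfl

lemma tensorLeft_comp (T : Matrix n n ℂ →ₗ[ℂ] Matrix l l ℂ)
    (S : Matrix m m ℂ →ₗ[ℂ] Matrix n n ℂ) :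
    tensorLeft G (T ∘ₗ S) = tensorLeft G T ∘ₗ tensorLeft G S :=
  LinearMap.ext fun _ => rfl

lemma tensorLeft_sum (s : Finset ι) (T : ι → Matrix m m ℂ →ₗ[ℂ] Matrix n n ℂ) :
    tensorLeft G (∑ i ∈ s, T i) = ∑ i ∈ s, tensorLeft G (T i) :=
  LinearMap.ext fun X => by ext p q; simp [tensorLeft_apply, Matrix.sum_apply, LinearMap.sum_apply]

lemma tensorLeft_sandwich [Fintype G] [DecidableEq G] [Fintype m] (A B : Matrix n m ℂ) :
    tensorLeft G (sandwich A B) = sandwich ((1 : Matrix G G ℂ) ⊗ₖ A) (1 ⊗ₖ B) :=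
  LinearMap.ext fun X => by
    ext p q
    simp [tensorLeft_apply, sandwich_apply, mul_apply, one_apply, apply_ite (starRingEnd ℂ),
      Fintype.sum_prod_type, Finset.sum_mul]

lemma tensorLeft_eq_submatrix (e : G ≃ G') (T : Matrix m m ℂ →ₗ[ℂ] Matrix n n ℂ)
    (X : Matrix (G × m) (G × m) ℂ) :
    tensorLeft G T X =
      (tensorLeft G' T (X.submatrix (Prod.map e.symm id) (Prod.map e.symm id))).submatrix
        (Prod.map e id) (Prod.map e id) := by
  ext p q
  simp [tensorLeft_apply]

lemma IsCP.posSemidef_tensorLeft [Fintype G] [Fintype m] [Fintype n]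
    {T : Matrix m m ℂ →ₗ[ℂ] Matrix n n ℂ} (hT : IsCP T) {X : Matrix (G × m) (G × m) ℂ}
    (hX : X.PosSemidef) :
    (tensorLeft G T X).PosSemidef := by
  rw [tensorLeft_eq_submatrix (Fintype.equivFin G)]
  exact (hT _ _ (hX.submatrix _)).submatrix _

end TensorLeft

section Kraus

variable {l m n ι : Type*} [Fintype ι] [Fintype m]

def krausMap (K : ι → Matrix n m ℂ) : Matrix m m ℂ →ₗ[ℂ] Matrix n n ℂ :=
  ∑ i, sandwich (K i) (K i)

lemma krausMap_apply (K : ι → Matrix n m ℂ) (X : Matrix m m ℂ) :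
    krausMap K X = ∑ i, K i * X * (K i)ᴴ := by
  simp [krausMap, sandwich_apply]

lemma isCP_sandwich [Fintype n] (A : Matrix n m ℂ) : IsCP (sandwich A A) := fun k X hX => by
  rw [tensorLeft_sandwich, sandwich_apply]
  exact hX.mul_mul_conjTranspose_same _

lemma isCP_krausMap [Fintype n] (K : ι → Matrix n m ℂ) : IsCP (krausMap K) := fun k X hX => by
  rw [krausMap, tensorLeft_sum, LinearMap.sum_apply]
  exact posSemidef_sum _ fun i _ => isCP_sandwich (K i) k X hX

lemma IsChannel.comp [Fintype n] [Fintype l] {T : Matrix n n ℂ →ₗ[ℂ] Matrix l l ℂ}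
    {S : Matrix m m ℂ →ₗ[ℂ] Matrix n n ℂ} (hT : IsChannel T) (hS : IsChannel S) :
    IsChannel (T ∘ₗ S) :=
  ⟨fun k X hX => by rw [tensorLeft_comp]; exact hT.1 k _ (hS.1 k X hX),
    fun X => by rw [LinearMap.comp_apply, hT.2, hS.2]⟩

lemma isChannel_sandwich [DecidableEq m] [Fintype n] (A : Matrix n m ℂ) (h : Aᴴ * A = 1) :
    IsChannel (sandwich A A) :=
  ⟨isCP_sandwich A, fun X => by rw [trace_sandwich, h, Matrix.one_mul]⟩

lemma trace_krausMap [Fintype n] (K : ι → Matrix n m ℂ) (X : Matrix m m ℂ) :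
    (krausMap K X).trace = ((∑ i, (K i)ᴴ * K i) * X).trace := by
  simp only [krausMap, LinearMap.sum_apply, trace_sum, trace_sandwich, Finset.sum_mul]

lemma isChannel_krausMap_iff [DecidableEq m] [Fintype n] (K : ι → Matrix n m ℂ) :
    IsChannel (krausMap K) ↔ ∑ i, (K i)ᴴ * K i = 1 := by
  refine ⟨fun h => ?_, fun h => ⟨isCP_krausMap K, fun X => by rw [trace_krausMap, h, one_mul]⟩⟩
  ext a b
  have h_single := h.2 (single b a 1)
  rw [trace_krausMap, trace_mul_single] at h_single
  by_cases hab : a = b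
  · subst hab; simpa using h_single
  · simpa [hab, Ne.symm hab] using h_single

lemma sandwich_comp_krausMap [Fintype n] (A : Matrix l n ℂ) (K : ι → Matrix n m ℂ) :
    sandwich A A ∘ₗ krausMap K = krausMap fun i => A * K i :=
  LinearMap.ext fun X => by
    simp [krausMap_apply, sandwich_apply, conjTranspose_mul, Matrix.mul_assoc]

end Kraus

section Choi

variable {m n : Type*} [Fintype m] [DecidableEq m]

lemma map_eq_sum_smul_map_single {l : Type*} (T : Matrix m m ℂ →ₗ[ℂ] Matrix l l ℂ)
    (X : Matrix m m ℂ) :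
    T X = ∑ a, ∑ b, X a b • T (single a b 1) := by
  conv_lhs => rw [matrix_eq_sum_single X]
  simp [map_sum, ← map_smul, smul_single]

def choiMatrix (T : Matrix m m ℂ →ₗ[ℂ] Matrix n n ℂ) : Matrix (m × n) (m × n) ℂ :=
  of fun p q => T (single p.1 q.1 1) p.2 q.2

lemma posSemidef_choiMatrix [Fintype n] {T : Matrix m m ℂ →ₗ[ℂ] Matrix n n ℂ} (hT : IsCP T) :
    (choiMatrix T).PosSemidef := by
  -- `ωᴴ * ω` is the unnormalised maximally entangled state `∑ a b, |a a⟩⟨b b|`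
  let ω : Matrix Unit (m × m) ℂ := of fun _ p => if p.1 = p.2 then 1 else 0
  have h_choi : choiMatrix T = tensorLeft m T (ωᴴ * ω) := by
    ext p q
    have h_block : (of fun i j => (ωᴴ * ω) (p.1, i) (q.1, j)) = single p.1 q.1 1 := by
      ext i j
      simp only [ω, mul_apply, conjTranspose_apply, of_apply, single_apply]
      split_ifs <;> simp_all
    rw [tensorLeft_apply, h_block]
    rfl
  rw [h_choi]
  exact hT.posSemidef_tensorLeft (posSemidef_conjTranspose_mul_self ω)

lemma eq_krausMap_of_choiMatrix_eq [Fintype n] (T : Matrix m m ℂ →ₗ[ℂ] Matrix n n ℂ)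
    (B : Matrix (m × n) (m × n) ℂ) (hB : choiMatrix T = Bᴴ * B) :
    T = krausMap fun x => of fun p a => star (B x (a, p)) := by
  refine LinearMap.ext fun X => ?_
  ext p q
  have h_entry : ∀ a b, T (single a b 1) p q = ∑ x, star (B x (a, p)) * B x (b, q) :=
    fun a b => congr_fun₂ hB (a, p) (b, q)
  simp only [map_eq_sum_smul_map_single T X, krausMap_apply, Matrix.sum_apply, Matrix.smul_apply,
    smul_eq_mul, h_entry, mul_apply, conjTranspose_apply, of_apply, star_star, Finset.mul_sum,
    Finset.sum_mul]
  rw [Finset.sum_comm]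
  refine (Finset.sum_congr rfl fun b _ => Finset.sum_comm).trans ?_
  rw [Finset.sum_comm]
  exact Finset.sum_congr rfl fun x _ => Finset.sum_congr rfl fun b _ =>
    Finset.sum_congr rfl fun a _ => by ring

lemma exists_krausMap_eq_of_isCP [Fintype n] [DecidableEq n] {T : Matrix m m ℂ →ₗ[ℂ] Matrix n n ℂ}
    (hT : IsCP T) : ∃ K : m × n → Matrix n m ℂ, T = krausMap K := by
  obtain ⟨B, hB⟩ : ∃ B : Matrix (m × n) (m × n) ℂ, choiMatrix T = star B * B := by
    open scoped MatrixOrder in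
    exact CStarAlgebra.nonneg_iff_eq_star_mul_self.mp (posSemidef_choiMatrix hT).nonneg
  exact ⟨_, eq_krausMap_of_choiMatrix_eq T B hB⟩

end Choi

lemma eq_zero_of_sum_mul_star_self_eq_zero {ι : Type*} {s : Finset ι} {f : ι → ℂ}
    (h : ∑ i ∈ s, f i * star (f i) = 0) {i : ι} (hi : i ∈ s) : f i = 0 :=
  CStarRing.mul_star_self_eq_zero_iff _ |>.mp <|
    (Finset.sum_eq_zero_iff_of_nonneg fun j _ => mul_star_self_nonneg (f j)).mp h i hi

lemma eq_smul_one_of_krausMap_eq_id {ι m : Type*} [Fintype ι] [Fintype m] [DecidableEq m]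
    (A : ι → Matrix m m ℂ) (h : krausMap A = LinearMap.id) (i : ι) (m₀ : m) :
    A i = A i m₀ m₀ • 1 := by
  have h_single : ∀ a b j l, ∑ i, A i a j * star (A i b l) = (single j l 1 : Matrix m m ℂ) a b := by
    intro a b j l
    simp_rw [← sandwich_single_apply, ← Matrix.sum_apply, ← LinearMap.sum_apply]
    rw [← krausMap, h, LinearMap.id_apply]
  have h_offdiag : ∀ a j, a ≠ j → A i a j = 0 := fun a j haj => by
    refine eq_zero_of_sum_mul_star_self_eq_zero (f := fun i => A i a j) ?_ (Finset.mem_univ i)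
    exact (h_single a a j j).trans (single_apply_of_ne _ _ _ _ _ (by tauto))
  have h_diag : ∀ j, A i j j = A i m₀ m₀ := fun j => sub_eq_zero.mp <| by
    refine eq_zero_of_sum_mul_star_self_eq_zero (f := fun i => A i j j - A i m₀ m₀) ?_
      (Finset.mem_univ i)
    simp only [star_sub, mul_sub, sub_mul, Finset.sum_sub_distrib, h_single, single_apply_same]
    ring
  ext a b
  by_cases hab : a = b
  · subst hab; simp [h_diag]
  · simp [hab, h_offdiag a b hab]

section PartialTrace

variable {a a' b c d : Type*} [Fintype b]

lemma ptraceRight_apply (X : Matrix (a × b) (a × b) ℂ) (i j : a) :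
    ptraceRight a b X i j = ∑ k, X (i, k) (j, k) := rfl

lemma ptraceRight_kronecker (ρ : Matrix a a ℂ) (σ : Matrix b b ℂ) :
    ptraceRight a b (ρ ⊗ₖ σ) = σ.trace • ρ := by
  ext i j
  simp [ptraceRight_apply, trace, ← Finset.mul_sum, mul_comm]

lemma ptraceRight_comp_sandwich_kronecker_one [Fintype a] [DecidableEq b] (A B : Matrix a' a ℂ) :
    ptraceRight a' b ∘ₗ sandwich (A ⊗ₖ (1 : Matrix b b ℂ)) (B ⊗ₖ 1)
      = sandwich A B ∘ₗ ptraceRight a b := by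
  refine LinearMap.ext fun X => ?_
  ext i j
  simp only [LinearMap.comp_apply, sandwich_apply, ptraceRight_apply, mul_apply,
    kroneckerMap_apply, one_apply, mul_ite, mul_one, mul_zero, ite_mul, zero_mul,
    Fintype.sum_prod_type, Finset.sum_ite_eq, Finset.mem_univ, if_true, conjTranspose_apply,
    apply_ite star, star_zero, Finset.sum_mul, Finset.mul_sum]
  rw [Finset.sum_comm]
  exact Finset.sum_congr rfl fun _ _ => Finset.sum_comm

lemma ptraceRight_sandwich_kronecker_single [Fintype c] [Fintype d] [DecidableEq d]
    (A : Matrix (a × b) (c × d) ℂ) (ρ : Matrix c c ℂ) (g : d) :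
    ptraceRight a b (A * (ρ ⊗ₖ single g g 1) * Aᴴ)
      = ∑ f, A.submatrix (·, f) (·, g) * ρ * (A.submatrix (·, f) (·, g))ᴴ := by
  ext i j
  simp [ptraceRight_apply, mul_apply, single_apply, Fintype.sum_prod_type, Matrix.sum_apply,
    Finset.sum_mul, ite_and]

end PartialTrace

section PartialTraceInvariant

variable {ι a b : Type*} [Fintype ι] [Fintype a] [Fintype b] [DecidableEq b]

lemma krausMap_blocks_eq_id (K : ι → Matrix (a × b) (a × b) ℂ)
    (h : ptraceRight a b ∘ₗ krausMap K = ptraceRight a b) (g : b) :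
    krausMap (fun p : ι × b => (K p.1).submatrix (·, p.2) (·, g)) = LinearMap.id := by
  refine LinearMap.ext fun ρ => ?_
  have h_ρ := LinearMap.congr_fun h (ρ ⊗ₖ single g g 1)
  simp only [LinearMap.comp_apply, krausMap_apply, map_sum, ptraceRight_sandwich_kronecker_single,
    ptraceRight_kronecker, trace_single_eq_same, one_smul] at h_ρ
  rw [krausMap_apply, Fintype.sum_prod_type, LinearMap.id_apply, h_ρ]

lemma eq_one_kronecker_of_ptraceRight_comp_krausMap [DecidableEq a]
    (K : ι → Matrix (a × b) (a × b) ℂ) (h : ptraceRight a b ∘ₗ krausMap K = ptraceRight a b)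
    (m₀ : a) (x : ι) :
    K x = 1 ⊗ₖ (K x).submatrix (m₀, ·) (m₀, ·) := by
  ext ⟨m, f⟩ ⟨n, g⟩
  have h_scalar := eq_smul_one_of_krausMap_eq_id _ (krausMap_blocks_eq_id K h g) (x, f) m₀
  simpa [one_apply] using congr_fun₂ h_scalar m n

lemma exists_eq_krausMap_one_kronecker [DecidableEq a] [Nonempty a]
    {S : Matrix (a × b) (a × b) ℂ →ₗ[ℂ] Matrix (a × b) (a × b) ℂ} (hS : IsCP S)
    (h : ptraceRight a b ∘ₗ S = ptraceRight a b) :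
    ∃ k : (a × b) × (a × b) → Matrix b b ℂ, S = krausMap fun x => 1 ⊗ₖ k x := by
  obtain ⟨K, rfl⟩ := exists_krausMap_eq_of_isCP hS
  obtain ⟨m₀⟩ := ‹Nonempty a›
  exact ⟨_, congr_arg krausMap <| funext <| eq_one_kronecker_of_ptraceRight_comp_krausMap K h m₀⟩

end PartialTraceInvariant

section TensorSuperop

variable {ι a b a' b' : Type*} [Fintype ι] [Fintype a] [DecidableEq a] [Fintype b] [DecidableEq b]

lemma tensorSuperop_apply (T : Matrix a a ℂ →ₗ[ℂ] Matrix a' a' ℂ)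
    (S : Matrix b b ℂ →ₗ[ℂ] Matrix b' b' ℂ) (X : Matrix (a × b) (a × b) ℂ) (p q : a' × b') :
    tensorSuperop T S X p q = ∑ i, ∑ j, ∑ k, ∑ l,
      X (i, k) (j, l) * T (single i j 1) p.1 q.1 * S (single k l 1) p.2 q.2 :=
  rfl

lemma tensorSuperop_sum_right (T : Matrix a a ℂ →ₗ[ℂ] Matrix a' a' ℂ)
    (S : ι → Matrix b b ℂ →ₗ[ℂ] Matrix b' b' ℂ) :
    tensorSuperop T (∑ x, S x) = ∑ x, tensorSuperop T (S x) := by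
  refine LinearMap.ext fun X => ?_
  ext p q
  simp only [tensorSuperop_apply, LinearMap.sum_apply, Matrix.sum_apply, Finset.mul_sum]
  refine (Finset.sum_congr rfl fun _ _ => Finset.sum_congr rfl fun _ _ => ?_).trans
    Finset.sum_comm_cycle
  exact Finset.sum_comm_cycle

lemma tensorSuperop_sandwich_sandwich (A B : Matrix a' a ℂ) (C E : Matrix b' b ℂ) :
    tensorSuperop (sandwich A B) (sandwich C E) = sandwich (A ⊗ₖ C) (B ⊗ₖ E) := by
  refine LinearMap.ext fun X => ?_
  ext p q
  simp only [tensorSuperop_apply, sandwich_single_apply, sandwich_apply, mul_apply,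
    kroneckerMap_apply, Fintype.sum_prod_type, conjTranspose_apply, star_mul', Finset.sum_mul]
  rw [Finset.sum_comm]
  refine Finset.sum_congr rfl fun _ _ => Finset.sum_comm_cycle.trans ?_
  exact Finset.sum_congr rfl fun _ _ => Finset.sum_congr rfl fun _ _ =>
    Finset.sum_congr rfl fun _ _ => by ring

lemma tensorSuperop_sandwich_krausMap (A : Matrix a' a ℂ) (k : ι → Matrix b' b ℂ) :
    tensorSuperop (sandwich A A) (krausMap k) = krausMap fun x => A ⊗ₖ k x := by
  simp only [krausMap, tensorSuperop_sum_right, tensorSuperop_sandwich_sandwich]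

lemma isChannel_krausMap_of_isChannel_one_kronecker [Fintype b'] [Nonempty a]
    (k : ι → Matrix b' b ℂ) (h : IsChannel (krausMap fun x => (1 : Matrix a a ℂ) ⊗ₖ k x)) :
    IsChannel (krausMap k) := by
  rw [isChannel_krausMap_iff] at h ⊢
  obtain ⟨m₀⟩ := ‹Nonempty a›
  ext f g
  simpa [Matrix.sum_apply, conjTranspose_kronecker, ← mul_kronecker_mul, one_apply] using
    congr_fun₂ h (m₀, f) (m₀, g)

end TensorSuperop

theorem exists_eq_tensorSuperop_of_ptraceRight_comp_eq {a b : Type*} [Fintype a] [DecidableEq a]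
    [Fintype b] [DecidableEq b] {T : Matrix (a × b) (a × b) ℂ →ₗ[ℂ] Matrix (a × b) (a × b) ℂ}
    (hT : IsChannel T) {P : Matrix a a ℂ} (hP : P ∈ unitaryGroup a ℂ)
    (h : ptraceRight a b ∘ₗ T = sandwich P P ∘ₗ ptraceRight a b) :
    ∃ Fc : Matrix b b ℂ →ₗ[ℂ] Matrix b b ℂ, IsChannel Fc ∧ T = tensorSuperop (sandwich P P) Fc := by
  rcases isEmpty_or_nonempty a with ha | ha
  · exact ⟨LinearMap.id, sandwich_one (m := b) ▸ isChannel_sandwich 1 (by simp),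
      LinearMap.ext fun _ => Subsingleton.elim _ _⟩
  have hPP : Pᴴ * P = 1 := by simpa [star_eq_conjTranspose] using mem_unitaryGroup_iff'.mp hP
  have hPP' : P * Pᴴ = 1 := by simpa [star_eq_conjTranspose] using mem_unitaryGroup_iff.mp hP
  let S := sandwich (Pᴴ ⊗ₖ (1 : Matrix b b ℂ)) (Pᴴ ⊗ₖ 1) ∘ₗ T
  have hS : IsChannel S :=
    (isChannel_sandwich _ (by simp [conjTranspose_kronecker, ← mul_kronecker_mul, hPP'])).comp hT
  have hS_ptrace : ptraceRight a b ∘ₗ S = ptraceRight a b := by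
    rw [← LinearMap.comp_assoc, ptraceRight_comp_sandwich_kronecker_one, LinearMap.comp_assoc,
      h, ← LinearMap.comp_assoc, sandwich_comp_sandwich, hPP, sandwich_one, LinearMap.id_comp]
  obtain ⟨k, hk⟩ := exists_eq_krausMap_one_kronecker hS.1 hS_ptrace
  refine ⟨krausMap k, isChannel_krausMap_of_isChannel_one_kronecker k (hk ▸ hS), ?_⟩
  calc T = sandwich (P ⊗ₖ (1 : Matrix b b ℂ)) (P ⊗ₖ 1) ∘ₗ S := by
        rw [← LinearMap.comp_assoc, sandwich_comp_sandwich, ← mul_kronecker_mul, hPP',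
          Matrix.mul_one, one_kronecker_one, sandwich_one, LinearMap.id_comp]
    _ = krausMap fun x => P ⊗ₖ k x := by
        simp only [hk, sandwich_comp_krausMap, ← mul_kronecker_mul, Matrix.mul_one, Matrix.one_mul]
    _ = tensorSuperop (sandwich P P) (krausMap k) := (tensorSuperop_sandwich_krausMap P k).symm

lemma Code.isChannel_conj (D : Code N M F L) {R : Matrix L L ℂ →ₗ[ℂ] Matrix L L ℂ}
    (hR : IsChannel R) : IsChannel (sandwich D.Uᴴ D.Uᴴ ∘ₗ R ∘ₗ sandwich D.U D.U) :=
  (isChannel_sandwich _ (by simpa using D.U_unitary_right)).comp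
    (hR.comp (isChannel_sandwich _ D.U_unitary_left))

lemma Code.ptraceRight_comp_conj (D : Code N M F L) {R : Matrix L L ℂ →ₗ[ℂ] Matrix L L ℂ}
    {P : Matrix M M ℂ} (hint : D.decode ∘ₗ R = sandwich P P ∘ₗ D.decode) :
    ptraceRight M F ∘ₗ (sandwich D.Uᴴ D.Uᴴ ∘ₗ R ∘ₗ sandwich D.U D.U)
      = sandwich P P ∘ₗ ptraceRight M F := by
  have h_decode : D.decode ∘ₗ sandwich D.U D.U = ptraceRight M F := by
    rw [Code.decode, LinearMap.comp_assoc, sandwich_comp_sandwich, D.U_unitary_left,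
      sandwich_one, LinearMap.comp_id]
  calc ptraceRight M F ∘ₗ (sandwich D.Uᴴ D.Uᴴ ∘ₗ R ∘ₗ sandwich D.U D.U)
        = (D.decode ∘ₗ R) ∘ₗ sandwich D.U D.U := rfl
    _ = sandwich P P ∘ₗ ptraceRight M F := by
        rw [hint, LinearMap.comp_assoc, h_decode]

theorem unitary_transformation_rule_general
    {N M F L : Type*} [Fintype N] [Fintype M] [Fintype F] [Fintype L]
    [DecidableEq M] [DecidableEq F] [DecidableEq L]
    (D : Code N M F L) (P : Matrix M M ℂ) (hP : P ∈ Matrix.unitaryGroup M ℂ)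
    (R : Matrix L L ℂ →ₗ[ℂ] Matrix L L ℂ) (hR : IsChannel R)
    (hint : D.decode ∘ₗ R = sandwich P P ∘ₗ D.decode) :
    ∃ Fc : Matrix F F ℂ →ₗ[ℂ] Matrix F F ℂ, IsChannel Fc ∧
      ∀ X : Matrix (M × F) (M × F) ℂ,
        D.Uᴴ * R (D.U * X * D.Uᴴ) * D.U = tensorSuperop (sandwich P P) Fc X := by
  obtain ⟨Fc, hFc, h_split⟩ :=
    exists_eq_tensorSuperop_of_ptraceRight_comp_eq (D.isChannel_conj hR) hP
      (D.ptraceRight_comp_conj hint)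
  refine ⟨Fc, hFc, fun X => ?_⟩
  simpa [sandwich_apply] using LinearMap.congr_fun h_split X

/-- Transformation rule for a logical unitary gate: a channel `R` on the code space that
exactly implements the logical unitary channel `𝒫 = P · P*` splits, after conjugation by
the code unitary `U`, as `𝒫 ⊗ 𝓕` for some channel `𝓕` on the syndrome space. -/
theorem unitary_transformation_rule
    {N M F L : Type*} [Fintype N] [Fintype M] [Fintype F] [Fintype L]
    [DecidableEq N] [DecidableEq M] [DecidableEq F] [DecidableEq L]
    (D : Code N M F L) (P : Matrix M M ℂ) (hP : P ∈ Matrix.unitaryGroup M ℂ)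
    (R : Matrix L L ℂ →ₗ[ℂ] Matrix L L ℂ) (hR : IsChannel R)
    (hint : D.decode ∘ₗ R = sandwich P P ∘ₗ D.decode) :
    ∃ Fc : Matrix F F ℂ →ₗ[ℂ] Matrix F F ℂ, IsChannel Fc ∧
      ∀ X : Matrix (M × F) (M × F) ℂ,
        D.Uᴴ * R (D.U * X * D.Uᴴ) * D.U = tensorSuperop (sandwich P P) Fc X :=
  unitary_transformation_rule_general D P hP R hR hint

end Paper
end
end

section
/- For every natural number n, every real δ with 0 ≤ δ ≤ 1, and every natural number t with t ≥ 5nδ/(1+δ), one has ∑_{j=t+1}^{n} (n choose j) · δ^j ≤ exp(−nδ/3). -/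
/-!
Markov's trick with weight `2`: every term of the tail has `j ≥ t + 1`, so
`δ ^ j ≤ 2⁻¹ ^ (t + 1) * (2 * δ) ^ j`, and the tail is at most
`(1 + 2δ) ^ n / 2 ^ (t + 1) ≤ exp (2nδ - (t + 1) log 2)`.
The hypothesis on `t` forces `t ≥ 4nδ` whenever the tail is nonempty, and `4 log 2 > 7 / 3`.
-/

open Finset Real

lemma sum_Icc_choose_mul_pow_le_one_add_pow (a n : ℕ) {y : ℝ} (hy : 0 ≤ y) :
    ∑ j ∈ Icc a n, (n.choose j : ℝ) * y ^ j ≤ (1 + y) ^ n := by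
  rw [add_comm, add_pow]
  refine (sum_le_sum_of_subset_of_nonneg (fun j hj ↦ ?_) fun j _ _ ↦ by positivity).trans_eq
    (sum_congr rfl fun j _ ↦ by ring)
  rw [mem_range]
  exact Nat.lt_succ_of_le (mem_Icc.mp hj).2

lemma sum_Icc_choose_mul_pow_le_div_pow (s n : ℕ) {δ x : ℝ} (hδ : 0 ≤ δ) (hx : 1 ≤ x) :
    ∑ j ∈ Icc s n, (n.choose j : ℝ) * δ ^ j ≤ (1 + x * δ) ^ n / x ^ s := by
  have hx₀ : 0 < x := by linarith
  rw [le_div_iff₀ (by positivity), sum_mul]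
  refine le_trans (sum_le_sum fun j hj ↦ ?_)
    (sum_Icc_choose_mul_pow_le_one_add_pow s n (by positivity))
  have hxj : x ^ s ≤ x ^ j := pow_le_pow_right₀ hx (mem_Icc.mp hj).1
  calc (n.choose j : ℝ) * δ ^ j * x ^ s ≤ (n.choose j : ℝ) * δ ^ j * x ^ j := by gcongr
    _ = (n.choose j : ℝ) * (x * δ) ^ j := by ring

lemma one_add_two_mul_pow_div_two_pow_le_exp {n s : ℕ} {δ : ℝ} (hδ : 0 ≤ δ)
    (hs : 4 * n * δ ≤ s) : (1 + 2 * δ) ^ n / 2 ^ s ≤ exp (-(n * δ) / 3) := by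
  have hpow : (1 + 2 * δ) ^ n ≤ exp (2 * n * δ) := by
    calc (1 + 2 * δ) ^ n ≤ exp (2 * δ) ^ n := by
          gcongr
          linarith [add_one_le_exp (2 * δ)]
      _ = exp (2 * n * δ) := by rw [← exp_nat_mul]; ring_nf
  have htwo : exp (7 * n * δ / 3) ≤ 2 ^ s := by
    rw [← exp_log (by norm_num : (0 : ℝ) < 2), ← exp_nat_mul, exp_le_exp]
    nlinarith [log_two_gt_d9, mul_nonneg (Nat.cast_nonneg n) hδ]
  rw [div_le_iff₀ (by positivity)]
  calc (1 + 2 * δ) ^ n ≤ exp (-(n * δ) / 3) * exp (7 * n * δ / 3) := by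
        rw [← exp_add]; convert hpow using 2; ring
    _ ≤ exp (-(n * δ) / 3) * 2 ^ s := by gcongr

lemma four_mul_le_of_five_mul_div_le {n t : ℕ} {δ : ℝ} (hδ : 0 ≤ δ) (htn : t ≤ n)
    (ht : 5 * n * δ / (1 + δ) ≤ t) : 4 * n * δ ≤ t := by
  rw [div_le_iff₀ (by linarith)] at ht
  have : (t : ℝ) * δ ≤ n * δ := by gcongr
  linarith

theorem binomial_tail_bound_general (n : ℕ) (δ : ℝ) (hδ0 : 0 ≤ δ)
    (t : ℕ) (ht : 5 * n * δ / (1 + δ) ≤ (t : ℝ)) :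
    ∑ j ∈ Finset.Icc (t + 1) n, (n.choose j : ℝ) * δ ^ j ≤ Real.exp (-(n * δ) / 3) := by
  rcases le_or_gt n t with hnt | htn
  · rw [Icc_eq_empty (by omega), sum_empty]
    exact (exp_pos _).le
  have h4 : 4 * n * δ ≤ t := four_mul_le_of_five_mul_div_le hδ0 htn.le ht
  calc ∑ j ∈ Icc (t + 1) n, (n.choose j : ℝ) * δ ^ j
      ≤ (1 + 2 * δ) ^ n / 2 ^ (t + 1) := sum_Icc_choose_mul_pow_le_div_pow _ _ hδ0 one_le_two
    _ ≤ exp (-(n * δ) / 3) :=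
        one_add_two_mul_pow_div_two_pow_le_exp hδ0 (by push_cast; linarith)

/-- Binomial tail bound: for `0 ≤ δ ≤ 1` and `t ≥ 5nδ/(1+δ)`,
`∑_{j=t+1}^{n} (n choose j) δ^j ≤ exp(−nδ/3)`. -/
theorem binomial_tail_bound (n : ℕ) (δ : ℝ) (hδ0 : 0 ≤ δ) (hδ1 : δ ≤ 1)
    (t : ℕ) (ht : 5 * n * δ / (1 + δ) ≤ (t : ℝ)) :
    ∑ j ∈ Finset.Icc (t + 1) n, (n.choose j : ℝ) * δ ^ j ≤ Real.exp (-(n * δ) / 3) :=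
  binomial_tail_bound_general n δ hδ0 t ht
end

section
/- For every natural number n and every real δ ≥ 0 with n·δ ≤ 1, one has ∑_{j=2}^{n} (n choose j) · δ^j ≤ e · (n choose 2) · δ², where e is Euler's constant. -/
/-!
Writing `(n choose j) = n^{(j)} / j!` with the falling factorial `n^{(j)} ≤ n^{(2)} n^{j-2}`, each term
is at most `n^{(2)} δ² (nδ)^{j-2} / j! ≤ 2 (n choose 2) δ² / j!`. Summing, `∑_{j ≥ 2} 1/j! = e - 2`,
and `2 (e - 2) ≤ e` because `e ≤ 4`.
-/

open Finset Nat

theorem Nat.descFactorial_le_descFactorial_mul_pow (n : ℕ) {k m : ℕ} (hkm : k ≤ m) :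
    n.descFactorial m ≤ n.descFactorial k * n ^ (m - k) := by
  rw [← descFactorial_mul_descFactorial hkm, mul_comm]
  gcongr
  exact (descFactorial_le_pow _ _).trans (Nat.pow_le_pow_left (Nat.sub_le n k) _)

theorem Nat.choose_mul_pow_le_of_mul_le_one {n k j : ℕ} {δ : ℝ} (hδ : 0 ≤ δ)
    (h : (n : ℝ) * δ ≤ 1) (hkj : k ≤ j) :
    (n.choose j : ℝ) * δ ^ j ≤ n.descFactorial k * δ ^ k / j ! := by
  have hdesc : (n.descFactorial j : ℝ) ≤ n.descFactorial k * (n : ℝ) ^ (j - k) := by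
    exact_mod_cast n.descFactorial_le_descFactorial_mul_pow hkj
  rw [le_div_iff₀ (by positivity), mul_right_comm, ← cast_comm, ← cast_mul,
    ← descFactorial_eq_factorial_mul_choose]
  calc (n.descFactorial j : ℝ) * δ ^ j
      ≤ n.descFactorial k * (n : ℝ) ^ (j - k) * δ ^ j := by gcongr
    _ = n.descFactorial k * δ ^ k * ((n : ℝ) * δ) ^ (j - k) := by
        rw [mul_pow, ← pow_sub_mul_pow δ hkj]; ring
    _ ≤ n.descFactorial k * δ ^ k :=
        mul_le_of_le_one_right (by positivity) (pow_le_one₀ (by positivity) h)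

theorem Real.sum_Ico_pow_div_factorial_le_exp_sub {x : ℝ} (hx : 0 ≤ x) (k m : ℕ) :
    ∑ i ∈ Ico k m, x ^ i / i ! ≤ exp x - ∑ i ∈ range k, x ^ i / i ! := by
  rcases le_total k m with hkm | hmk
  · rw [le_sub_iff_add_le', sum_range_add_sum_Ico _ hkm]
    exact sum_le_exp_of_nonneg hx m
  · rw [Ico_eq_empty_of_le hmk, sum_empty, sub_nonneg]
    exact sum_le_exp_of_nonneg hx k

/-- Level-one bound on the weight of bad fault paths: for `0 ≤ δ` with `nδ ≤ 1`,
`∑_{j=2}^{n} (n choose j) δ^j ≤ e · (n choose 2) · δ²`. -/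
theorem bad_fault_path_level_one_bound (n : ℕ) (δ : ℝ) (hδ0 : 0 ≤ δ)
    (h : (n : ℝ) * δ ≤ 1) :
    ∑ j ∈ Finset.Icc 2 n, (n.choose j : ℝ) * δ ^ j
      ≤ Real.exp 1 * (n.choose 2 : ℝ) * δ ^ 2 := by
  have hdesc : (n.descFactorial 2 : ℝ) = 2 * n.choose 2 := by
    rw [descFactorial_eq_factorial_mul_choose]; push_cast; rfl
  have hfactorials : ∑ j ∈ Icc 2 n, (1 : ℝ) / j ! ≤ Real.exp 1 - 2 := by
    simpa [sum_range_succ, ← Ico_add_one_right_eq_Icc, one_add_one_eq_two] using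
      Real.sum_Ico_pow_div_factorial_le_exp_sub zero_le_one 2 (n + 1)
  calc ∑ j ∈ Icc 2 n, (n.choose j : ℝ) * δ ^ j
      ≤ ∑ j ∈ Icc 2 n, (n.descFactorial 2 : ℝ) * δ ^ 2 / j ! :=
        sum_le_sum fun j hj ↦ choose_mul_pow_le_of_mul_le_one hδ0 h (mem_Icc.1 hj).1
    _ = 2 * n.choose 2 * δ ^ 2 * ∑ j ∈ Icc 2 n, (1 : ℝ) / j ! := by
        rw [mul_sum, hdesc]; simp_rw [mul_one_div]
    _ ≤ 2 * n.choose 2 * δ ^ 2 * (Real.exp 1 - 2) := by gcongr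
    _ ≤ Real.exp 1 * n.choose 2 * δ ^ 2 := by
        have : (0 : ℝ) ≤ n.choose 2 * δ ^ 2 := by positivity
        nlinarith [Real.exp_one_lt_three]
end

section
/- Let N ≥ 2 be an integer, set c := e · (N choose 2) where e is Euler's constant, and let x be a real number with 0 ≤ x ≤ 1. Let (a_r)_{r ≥ 1} be a sequence of nonnegative real numbers such that a₁ ≤ x²/c and, for every r ≥ 2, a_r ≤ ∑_{j=2}^{N} (N choose j) · (a_{r−1})^j. Then a_r ≤ x^{2^r}/c for every r ≥ 1. -/
/-!
From `C(N,j) C(j,2) = C(N,2) C(N-2,j-2)`, the tail `∑_{j ≥ 2} C(N,j) t^j` is at most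
`C(N,2) t² (1+t)^(N-2) ≤ e C(N,2) t² = c t²` as soon as `(N-2) t ≤ 1`, which holds for `t ≤ 1/c`.
So `a_{r+1} ≤ c a_r²` while `a_r ≤ 1/c`, and the bound `a_r ≤ x^(2^r)/c ≤ 1/c` squares from one
level to the next.
-/

open Finset Real

theorem Nat.choose_le_choose_two_mul_choose_sub_two (n : ℕ) {j : ℕ} (hj : 2 ≤ j) :
    n.choose j ≤ n.choose 2 * (n - 2).choose (j - 2) :=
  (Nat.le_mul_of_pos_right _ (Nat.choose_pos hj)).trans_eq (Nat.choose_mul hj)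

theorem Nat.sub_two_le_choose_two (n : ℕ) : n - 2 ≤ n.choose 2 := by
  rcases n with _ | n
  · simp
  · rw [Nat.choose_succ_succ', Nat.choose_one_right]
    omega

theorem one_add_pow_le_exp_mul (n : ℕ) {t : ℝ} (ht : -1 ≤ t) : (1 + t) ^ n ≤ exp (n * t) := by
  rw [exp_nat_mul]
  exact pow_le_pow_left₀ (by linarith) (by linarith [add_one_le_exp t]) n

theorem sum_Icc_two_choose_mul_pow_le (N : ℕ) {t : ℝ} (ht : 0 ≤ t) :
    ∑ j ∈ Icc 2 N, (N.choose j : ℝ) * t ^ j ≤ N.choose 2 * t ^ 2 * (1 + t) ^ (N - 2) := by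
  calc ∑ j ∈ Icc 2 N, (N.choose j : ℝ) * t ^ j
      ≤ ∑ j ∈ Icc 2 N, N.choose 2 * t ^ 2 * ((N - 2).choose (j - 2) * t ^ (j - 2)) := by
        refine sum_le_sum fun j hj => ?_
        have hj2 : 2 ≤ j := (mem_Icc.1 hj).1
        have hchoose : (N.choose j : ℝ) ≤ N.choose 2 * (N - 2).choose (j - 2) := by
          exact_mod_cast Nat.choose_le_choose_two_mul_choose_sub_two N hj2
        calc (N.choose j : ℝ) * t ^ j = N.choose j * (t ^ 2 * t ^ (j - 2)) := by
              rw [← pow_add, Nat.add_sub_cancel' hj2]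
          _ ≤ N.choose 2 * (N - 2).choose (j - 2) * (t ^ 2 * t ^ (j - 2)) := by gcongr
          _ = _ := by ring
    _ = N.choose 2 * t ^ 2 * ∑ i ∈ range (N + 1 - 2), ((N - 2).choose i * t ^ i) := by
        rw [mul_sum, ← Ico_add_one_right_eq_Icc, sum_Ico_eq_sum_range]
        simp
    _ ≤ N.choose 2 * t ^ 2 * ∑ i ∈ range (N - 2 + 1), ((N - 2).choose i * t ^ i) := by
        gcongr
        omega
    _ = N.choose 2 * t ^ 2 * (1 + t) ^ (N - 2) := by
        rw [add_comm 1 t, add_pow]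
        simp [mul_comm]

theorem sum_Icc_two_choose_mul_pow_le_exp_mul (N : ℕ) {t : ℝ} (ht : 0 ≤ t)
    (hNt : ((N - 2 : ℕ) : ℝ) * t ≤ 1) :
    ∑ j ∈ Icc 2 N, (N.choose j : ℝ) * t ^ j ≤ exp 1 * N.choose 2 * t ^ 2 :=
  calc ∑ j ∈ Icc 2 N, (N.choose j : ℝ) * t ^ j
      ≤ N.choose 2 * t ^ 2 * (1 + t) ^ (N - 2) := sum_Icc_two_choose_mul_pow_le N ht
    _ ≤ N.choose 2 * t ^ 2 * exp 1 := by
        gcongr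
        exact (one_add_pow_le_exp_mul _ (by linarith)).trans (exp_le_exp.2 hNt)
    _ = exp 1 * N.choose 2 * t ^ 2 := by ring

theorem le_pow_two_pow_div_of_le_mul_sq {c x : ℝ} {a : ℕ → ℝ} (hc : 0 ≤ c) (hx0 : 0 ≤ x)
    (hx1 : x ≤ 1) (ha_nonneg : ∀ r, 1 ≤ r → 0 ≤ a r) (ha1 : a 1 ≤ x ^ 2 / c)
    (hstep : ∀ r, 1 ≤ r → a r ≤ c⁻¹ → a (r + 1) ≤ c * a r ^ 2) :
    ∀ r, 1 ≤ r → a r ≤ x ^ 2 ^ r / c := by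
  intro r hr
  induction r, hr using Nat.le_induction with
  | base => simpa using ha1
  | succ r hr ih =>
    have hy : x ^ 2 ^ r ≤ 1 := pow_le_one₀ hx0 hx1
    have har_le : a r ≤ c⁻¹ := ih.trans ((div_le_div_of_nonneg_right hy hc).trans_eq (one_div c))
    calc a (r + 1)
        ≤ c * a r ^ 2 := hstep r hr har_le
      _ ≤ c * (x ^ 2 ^ r / c) ^ 2 := by gcongr; exact ha_nonneg r hr
      _ = x ^ 2 ^ (r + 1) / c := by
        rcases hc.eq_or_lt with rfl | hc
        · simp
        · field_simp; ring

theorem error_suppression_recursion_general (N : ℕ) (x : ℝ)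
    (hx0 : 0 ≤ x) (hx1 : x ≤ 1) (a : ℕ → ℝ)
    (ha_nonneg : ∀ r, 1 ≤ r → 0 ≤ a r)
    (ha1 : a 1 ≤ x ^ 2 / (Real.exp 1 * (N.choose 2 : ℝ)))
    (harec : ∀ r, 2 ≤ r → a r ≤ ∑ j ∈ Finset.Icc 2 N, (N.choose j : ℝ) * a (r - 1) ^ j) :
    ∀ r, 1 ≤ r → a r ≤ x ^ (2 ^ r) / (Real.exp 1 * (N.choose 2 : ℝ)) := by
  set c := exp 1 * (N.choose 2 : ℝ)
  have hc : 0 ≤ c := by positivity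
  have hNc : ((N - 2 : ℕ) : ℝ) ≤ c := calc
    ((N - 2 : ℕ) : ℝ) ≤ N.choose 2 := by exact_mod_cast Nat.sub_two_le_choose_two N
    _ ≤ c := le_mul_of_one_le_left (by positivity) (one_le_exp zero_le_one)
  refine le_pow_two_pow_div_of_le_mul_sq hc hx0 hx1 ha_nonneg ha1 fun r hr har => ?_
  have har0 := ha_nonneg r hr
  have hNa : ((N - 2 : ℕ) : ℝ) * a r ≤ 1 := calc
    ((N - 2 : ℕ) : ℝ) * a r ≤ c * c⁻¹ := mul_le_mul hNc har har0 hc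
    _ ≤ 1 := mul_inv_le_one
  calc a (r + 1) ≤ ∑ j ∈ Icc 2 N, (N.choose j : ℝ) * a r ^ j := by
        simpa using harec (r + 1) (by omega)
    _ ≤ c * a r ^ 2 := sum_Icc_two_choose_mul_pow_le_exp_mul N har0 hNa

/-- The doubly-exponential error-suppression recursion: if `a₁ ≤ x²/c` and
`a_r ≤ ∑_{j=2}^{N} (N choose j) a_{r−1}^j` for `r ≥ 2`, where `c = e·(N choose 2)`,
then `a_r ≤ x^(2^r)/c` for all `r ≥ 1`. -/
theorem error_suppression_recursion (N : ℕ) (hN : 2 ≤ N) (x : ℝ)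
    (hx0 : 0 ≤ x) (hx1 : x ≤ 1) (a : ℕ → ℝ)
    (ha_nonneg : ∀ r, 1 ≤ r → 0 ≤ a r)
    (ha1 : a 1 ≤ x ^ 2 / (Real.exp 1 * (N.choose 2 : ℝ)))
    (harec : ∀ r, 2 ≤ r → a r ≤ ∑ j ∈ Finset.Icc 2 N, (N.choose j : ℝ) * a (r - 1) ^ j) :
    ∀ r, 1 ≤ r → a r ≤ x ^ (2 ^ r) / (Real.exp 1 * (N.choose 2 : ℝ)) :=
  error_suppression_recursion_general N x hx0 hx1 a ha_nonneg ha1 harec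
end
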